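/- Let ψ be a Lévy exponent whose Lévy measure ρ satisfies: there exist constants α ∈ (0,2) and c > 0 such that ∫_{{z : |vz| ≤ 1}} |vz|² ρ(dz) ≥ c|v|^{2−α} for every v ∈ ℝ with |v| ≥ 1. Then for every v ∈ ℝ with |v| ≥ 1, Re ψ(v) ≥ (2c/π²) |v|^{2−α}. -/

import Mathlib

open MeasureTheory Complex Filter Topology

/-- The Lévy exponent with drift `b`, Gaussian coefficient `σ` and Lévy measure `ρ`:
`ψ(θ) = i b θ + σ²θ²/2 − ∫ (e^{iθu} − 1 − iθu/(1+u²)) ρ(du)`. -/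
noncomputable def levyExponent (b σ : ℝ) (ρ : Measure ℝ) (θ : ℝ) : ℂ :=
  Complex.I * b * θ + σ ^ 2 * θ ^ 2 / 2
    - ∫ u : ℝ, (Complex.exp (Complex.I * θ * u) - 1 - Complex.I * θ * u / (1 + u ^ 2)) ∂ρ

/-- `ρ` is a Lévy measure: no mass at `0` and `∫ min(1,u²) ρ(du) < ∞`. -/
def IsLevyMeasure (ρ : Measure ℝ) : Prop :=
  ρ {0} = 0 ∧ ∫⁻ u : ℝ, ENNReal.ofReal (min 1 (u ^ 2)) ∂ρ < ⊤

/-!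
Since `Re (e^{iθu} - 1 - iθu/(1+u²)) = cos (θu) - 1`, the real part of the Lévy exponent is
`σ²θ²/2 + ∫ (1 - cos (θu)) ρ(du)`, the integral being finite because the integrand is
`O(min 1 u²)`. On `{z : |vz| ≤ 1}` the elementary bound `1 - cos x ≥ 2x²/π²` (valid for `|x| ≤ π`)
turns the lower bound on `∫_{|vz| ≤ 1} |vz|² dρ` into one for `Re ψ(v)`.
-/

open Real in
theorem Real.two_div_pi_sq_mul_sq_le_one_sub_cos {x : ℝ} (hx : |x| ≤ π) :
    2 / π ^ 2 * x ^ 2 ≤ 1 - cos x := by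
  have hsin : |x| / π ≤ sin (|x| / 2) := by
    have := mul_le_sin (x := |x| / 2) (by positivity) (by linarith)
    rwa [show 2 / π * (|x| / 2) = |x| / π by field_simp] at this
  calc 2 / π ^ 2 * x ^ 2 = 2 * (|x| / π) ^ 2 := by rw [div_pow, sq_abs]; ring
    _ ≤ 2 * sin (|x| / 2) ^ 2 := by gcongr
    _ = 1 - cos (2 * (|x| / 2)) := by rw [cos_two_mul_eq_one_sub]; ring
    _ = 1 - cos x := by rw [mul_div_cancel₀ _ two_ne_zero, cos_abs]

theorem Complex.norm_exp_I_mul_ofReal_sub_one_sub_le (x : ℝ) :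
    ‖exp (I * x) - 1 - I * x‖ ≤ 2 * x ^ 2 := by
  have hIx : ‖I * x‖ = |x| := by simp
  rcases le_or_gt |x| 1 with hx | hx
  · have := Complex.norm_exp_sub_one_sub_id_le (x := I * x) (hIx ▸ hx)
    rw [hIx, sq_abs] at this
    nlinarith [sq_nonneg x]
  · calc ‖exp (I * x) - 1 - I * x‖ ≤ ‖exp (I * x) - 1‖ + ‖I * x‖ := norm_sub_le _ _
      _ ≤ |x| + |x| := by
        rw [hIx]; gcongr; exact Real.norm_exp_I_mul_ofReal_sub_one_le
      _ ≤ 2 * x ^ 2 := by nlinarith [sq_abs x]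

noncomputable def levyIntegrand (θ u : ℝ) : ℂ :=
  exp (I * θ * u) - 1 - I * θ * u / (1 + u ^ 2)

theorem levyIntegrand_eq_ofReal (θ u : ℝ) :
    levyIntegrand θ u =
      exp (I * ((θ * u : ℝ) : ℂ)) - 1 - ((θ * u / (1 + u ^ 2) : ℝ) : ℂ) * I := by
  unfold levyIntegrand; push_cast; ring_nf

theorem levyIntegrand_re (θ u : ℝ) : (levyIntegrand θ u).re = Real.cos (θ * u) - 1 := by
  rw [levyIntegrand_eq_ofReal, mul_comm I]
  simp only [sub_re, exp_ofReal_mul_I_re, one_re, mul_I_re, ofReal_im, neg_zero, sub_zero]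

theorem abs_div_one_add_sq_le_one (u : ℝ) : |u| / (1 + u ^ 2) ≤ 1 := by
  rw [div_le_one (by positivity)]
  nlinarith [sq_abs u, sq_nonneg (|u| - 1)]

theorem norm_levyIntegrand_le_const (θ u : ℝ) : ‖levyIntegrand θ u‖ ≤ 2 + |θ| := by
  have h1 : ‖exp (I * ((θ * u : ℝ) : ℂ)) - 1‖ ≤ 2 := by
    grw [norm_sub_le, norm_exp_I_mul_ofReal, norm_one]; norm_num
  have h2 : |θ * u / (1 + u ^ 2)| ≤ |θ| := by
    rw [abs_div, abs_mul, abs_of_pos (by positivity : (0:ℝ) < 1 + u ^ 2), mul_div_assoc]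
    exact mul_le_of_le_one_right (abs_nonneg θ) (abs_div_one_add_sq_le_one u)
  rw [levyIntegrand_eq_ofReal]
  grw [norm_sub_le, h1, norm_mul, norm_I, mul_one, norm_real, Real.norm_eq_abs, h2]

theorem norm_levyIntegrand_le_sq (θ u : ℝ) :
    ‖levyIntegrand θ u‖ ≤ (2 * θ ^ 2 + |θ|) * u ^ 2 := by
  have hsplit : levyIntegrand θ u = (exp (I * ((θ * u : ℝ) : ℂ)) - 1 - I * ((θ * u : ℝ) : ℂ))
      + ((θ * u * (u ^ 2 / (1 + u ^ 2)) : ℝ) : ℂ) * I := by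
    have : (1 + (u : ℂ) ^ 2) ≠ 0 := by exact_mod_cast (by positivity : (1 + u ^ 2 : ℝ) ≠ 0)
    unfold levyIntegrand; push_cast; field_simp; ring
  have h2 : |θ * u * (u ^ 2 / (1 + u ^ 2))| ≤ |θ| * u ^ 2 := by
    rw [abs_mul, abs_mul, abs_div, abs_of_pos (by positivity : (0:ℝ) < 1 + u ^ 2), abs_sq]
    have := abs_div_one_add_sq_le_one u
    calc |θ| * |u| * (u ^ 2 / (1 + u ^ 2)) = |θ| * u ^ 2 * (|u| / (1 + u ^ 2)) := by ring
      _ ≤ |θ| * u ^ 2 := mul_le_of_le_one_right (by positivity) this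
  rw [hsplit]
  grw [norm_add_le, norm_exp_I_mul_ofReal_sub_one_sub_le, norm_mul, norm_I, mul_one, norm_real,
    Real.norm_eq_abs, h2]
  exact le_of_eq (by ring)

theorem norm_levyIntegrand_le_mul_min (θ u : ℝ) :
    ‖levyIntegrand θ u‖ ≤ (2 * θ ^ 2 + |θ| + 2) * min 1 (u ^ 2) := by
  rcases min_cases 1 (u ^ 2) with ⟨hmin, -⟩ | ⟨hmin, -⟩ <;> rw [hmin]
  · nlinarith [norm_levyIntegrand_le_const θ u, sq_nonneg θ]
  · nlinarith [norm_levyIntegrand_le_sq θ u, sq_nonneg u]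

theorem IsLevyMeasure.integrable_min_one_sq {ρ : Measure ℝ} (hρ : IsLevyMeasure ρ) :
    Integrable (fun u : ℝ => min 1 (u ^ 2)) ρ := by
  refine ⟨by fun_prop, ?_⟩
  rw [hasFiniteIntegral_iff_ofReal (ae_of_all _ fun u => by positivity)]
  exact hρ.2

theorem IsLevyMeasure.integrable_levyIntegrand {ρ : Measure ℝ} (hρ : IsLevyMeasure ρ) (θ : ℝ) :
    Integrable (levyIntegrand θ) ρ :=
  (hρ.integrable_min_one_sq.const_mul _).mono' (by unfold levyIntegrand; fun_prop)
    (ae_of_all _ (norm_levyIntegrand_le_mul_min θ))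

theorem IsLevyMeasure.integrable_one_sub_cos {ρ : Measure ℝ} (hρ : IsLevyMeasure ρ) (θ : ℝ) :
    Integrable (fun u => 1 - Real.cos (θ * u)) ρ :=
  (hρ.integrable_levyIntegrand θ).re.neg.congr
    (ae_of_all _ fun u => by simp [levyIntegrand_re])

theorem levyExponent_re {ρ : Measure ℝ} (hρ : IsLevyMeasure ρ) (b σ θ : ℝ) :
    (levyExponent b σ ρ θ).re = σ ^ 2 * θ ^ 2 / 2 + ∫ u, (1 - Real.cos (θ * u)) ∂ρ := by
  have hint : (∫ u, levyIntegrand θ u ∂ρ).re = -∫ u, (1 - Real.cos (θ * u)) ∂ρ := by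
    rw [← RCLike.re_eq_complex_re, ← integral_re (hρ.integrable_levyIntegrand θ), ← integral_neg]
    simp [levyIntegrand_re]
  change (I * b * θ + σ ^ 2 * θ ^ 2 / 2 - ∫ u, levyIntegrand θ u ∂ρ).re = _
  have hgauss : ((σ : ℂ) ^ 2 * θ ^ 2 / 2).re = σ ^ 2 * θ ^ 2 / 2 := by norm_cast
  simp [hint, hgauss]

theorem ofReal_two_div_pi_sq_mul_setLIntegral_le (ρ : Measure ℝ) (θ : ℝ) {s : Set ℝ}
    (hs : ∀ z ∈ s, |θ * z| ≤ Real.pi) :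
    ENNReal.ofReal (2 / Real.pi ^ 2) * ∫⁻ z in s, ENNReal.ofReal (|θ * z| ^ 2) ∂ρ ≤
      ∫⁻ z, ENNReal.ofReal (1 - Real.cos (θ * z)) ∂ρ := by
  rw [← lintegral_const_mul' _ _ ENNReal.ofReal_ne_top]
  refine (setLIntegral_mono (by fun_prop) fun z hz => ?_).trans (setLIntegral_le_lintegral _ _)
  rw [← ENNReal.ofReal_mul (by positivity), sq_abs]
  exact ENNReal.ofReal_le_ofReal (Real.two_div_pi_sq_mul_sq_le_one_sub_cos (hs z hz))

theorem levyExponent_re_lower_bound_general (b σ : ℝ) (ρ : Measure ℝ)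
    (hρ : IsLevyMeasure ρ) (α c : ℝ)
    (hlow : ∀ v : ℝ, 1 ≤ |v| →
      ENNReal.ofReal (c * |v| ^ (2 - α)) ≤
        ∫⁻ z in {z : ℝ | |v * z| ≤ 1}, ENNReal.ofReal (|v * z| ^ 2) ∂ρ) :
    ∀ v : ℝ, 1 ≤ |v| →
      (2 * c / Real.pi ^ 2) * |v| ^ (2 - α) ≤ (levyExponent b σ ρ v).re := by
  intro v hv
  have hcos_nonneg : ∀ z, 0 ≤ 1 - Real.cos (v * z) := fun z => sub_nonneg.2 (Real.cos_le_one _)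
  have hcos : ENNReal.ofReal (2 * c / Real.pi ^ 2 * |v| ^ (2 - α)) ≤
      ENNReal.ofReal (∫ z, (1 - Real.cos (v * z)) ∂ρ) :=
    calc ENNReal.ofReal (2 * c / Real.pi ^ 2 * |v| ^ (2 - α))
        = ENNReal.ofReal (2 / Real.pi ^ 2) * ENNReal.ofReal (c * |v| ^ (2 - α)) := by
          rw [← ENNReal.ofReal_mul (by positivity)]; ring_nf
      _ ≤ ENNReal.ofReal (2 / Real.pi ^ 2) *
          ∫⁻ z in {z : ℝ | |v * z| ≤ 1}, ENNReal.ofReal (|v * z| ^ 2) ∂ρ := by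
          gcongr; exact hlow v hv
      _ ≤ ∫⁻ z, ENNReal.ofReal (1 - Real.cos (v * z)) ∂ρ :=
          ofReal_two_div_pi_sq_mul_setLIntegral_le ρ v fun z hz =>
            hz.out.trans (by linarith [Real.pi_gt_three])
      _ = ENNReal.ofReal (∫ z, (1 - Real.cos (v * z)) ∂ρ) :=
          (ofReal_integral_eq_lintegral_ofReal (hρ.integrable_one_sub_cos v)
            (ae_of_all _ hcos_nonneg)).symm
  rw [ENNReal.ofReal_le_ofReal_iff (integral_nonneg hcos_nonneg)] at hcos
  rw [levyExponent_re hρ]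
  linarith [(by positivity : 0 ≤ σ ^ 2 * v ^ 2 / 2)]

/-- If `∫_{|vz|≤1} |vz|² ρ(dz) ≥ c|v|^{2−α}` for all `|v| ≥ 1`, then
`Re ψ(v) ≥ (2c/π²)|v|^{2−α}` for all `|v| ≥ 1`. -/
theorem levyExponent_re_lower_bound (b σ : ℝ) (hσ : 0 ≤ σ) (ρ : Measure ℝ)
    (hρ : IsLevyMeasure ρ) (α c : ℝ) (hα : 0 < α) (hα2 : α < 2) (hc : 0 < c)
    (hlow : ∀ v : ℝ, 1 ≤ |v| →
      ENNReal.ofReal (c * |v| ^ (2 - α)) ≤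
        ∫⁻ z in {z : ℝ | |v * z| ≤ 1}, ENNReal.ofReal (|v * z| ^ 2) ∂ρ) :
    ∀ v : ℝ, 1 ≤ |v| →
      (2 * c / Real.pi ^ 2) * |v| ^ (2 - α) ≤ (levyExponent b σ ρ v).re :=
  levyExponent_re_lower_bound_general b σ ρ hρ α c hlow
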